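/- Let N ≥ 1, b ≥ 0 be integers, dist : Fin N → ℕ with dist i ≤ b for all i, and g : Fin N → ℝ an arbitrary gain function. Then the average of DCG(σ) over the finite nonempty set of all rankings σ compatible with dist equals ∑_{d=0}^{b} ( (∑_{i : dist i = d} g i) / n_d ) · ∑_{t = N_{d−1}+1}^{N_d} 1 / Real.logb 2 (t + 1), where summands with n_d = 0 contribute 0 and all quantities are cast to ℝ. -/

import Mathlib

/-! The rankings compatible with `dist` form a set that is stable under permuting items of equal
distance, so every item of distance `d` receives, on average over these rankings, the same
discount. On the other hand, every compatible ranking places the `n_d` items of distance `d` exactly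
at the positions `N_{d-1}+1, …, N_d`, so the total of these average discounts over the tie block is
the sum of the discounts of those positions. Hence each item's average discount is the mean discount
of its block, and the average DCG is linear in these means. -/

open Finset

section PermutationAverages

variable {α β M : Type*}

theorem sum_sum_perm_apply_mul [Fintype α] [CommSemiring M] (S : Finset (Equiv.Perm α))
    (g w : α → M) :
    ∑ σ ∈ S, ∑ k, g (σ k) * w k = ∑ i, g i * ∑ σ ∈ S, w (σ⁻¹ i) := by
  have hreindex : ∀ σ : Equiv.Perm α, ∑ k, g (σ k) * w k = ∑ i, g i * w (σ⁻¹ i) := fun σ => by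
    simpa using Equiv.sum_comp σ (fun i => g i * w (σ⁻¹ i))
  simp only [hreindex, mul_sum]
  exact sum_comm

theorem sum_fiber_sum_perm_inv_apply [Fintype α] [DecidableEq β] [AddCommMonoid M] (f : α → β)
    (S : Finset (Equiv.Perm α)) (w : α → M) (b : β) :
    ∑ i with f i = b, ∑ σ ∈ S, w (σ⁻¹ i) = ∑ σ ∈ S, ∑ k with f (σ k) = b, w k := by
  rw [sum_comm]
  exact sum_congr rfl fun σ _ => sum_equiv σ⁻¹ (by simp) (by simp)

variable {f : α → β} {S : Finset (Equiv.Perm α)}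

theorem sum_perm_inv_apply_eq_of_eq [DecidableEq α] [AddCommMonoid M]
    (hS : ∀ τ : Equiv.Perm α, (∀ x, f (τ x) = f x) → ∀ σ ∈ S, τ * σ ∈ S) (w : α → M) {i j : α}
    (hij : f i = f j) : ∑ σ ∈ S, w (σ⁻¹ i) = ∑ σ ∈ S, w (σ⁻¹ j) := by
  have hswap : ∀ x, f (Equiv.swap i j x) = f x := fun x => by
    rcases eq_or_ne x i with rfl | hxi
    · simp [hij]
    rcases eq_or_ne x j with rfl | hxj
    · simp [hij]
    · rw [Equiv.swap_apply_of_ne_of_ne hxi hxj]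
  exact sum_nbij' (Equiv.swap i j * ·) (Equiv.swap i j * ·) (fun σ hσ => hS _ hswap σ hσ)
    (fun σ hσ => hS _ hswap σ hσ) (by simp [← mul_assoc]) (by simp [← mul_assoc]) (by simp)

theorem card_fiber_smul_sum_perm_inv_apply [Fintype α] [DecidableEq α] [DecidableEq β]
    [AddCommMonoid M]
    (hS : ∀ τ : Equiv.Perm α, (∀ x, f (τ x) = f x) → ∀ σ ∈ S, τ * σ ∈ S) (w : α → M) (i : α)
    {W : M} (hW : ∀ σ ∈ S, ∑ k with f (σ k) = f i, w k = W) :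
    #{j | f j = f i} • ∑ σ ∈ S, w (σ⁻¹ i) = #S • W := by
  calc #{j | f j = f i} • ∑ σ ∈ S, w (σ⁻¹ i)
      = ∑ j with f j = f i, ∑ σ ∈ S, w (σ⁻¹ j) := by
        rw [← sum_const]
        exact sum_congr rfl fun j hj =>
          sum_perm_inv_apply_eq_of_eq hS w (mem_filter.1 hj).2.symm
    _ = ∑ σ ∈ S, ∑ k with f (σ k) = f i, w k := sum_fiber_sum_perm_inv_apply f S w (f i)
    _ = #S • W := by rw [sum_congr rfl hW, sum_const]

theorem sum_perm_inv_apply_div_card [Fintype α] [DecidableEq α] [DecidableEq β] {K : Type*}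
    [Field K] [CharZero K]
    (hS : ∀ τ : Equiv.Perm α, (∀ x, f (τ x) = f x) → ∀ σ ∈ S, τ * σ ∈ S) (hne : S.Nonempty)
    (w : α → K) (i : α) {W : K} (hW : ∀ σ ∈ S, ∑ k with f (σ k) = f i, w k = W) :
    (∑ σ ∈ S, w (σ⁻¹ i)) / #S = W / #{j | f j = f i} := by
  have hfiber : (#{j | f j = f i} : K) ≠ 0 := by
    exact_mod_cast (card_pos.2 ⟨i, by simp⟩).ne'
  have hcard : (#S : K) ≠ 0 := by exact_mod_cast hne.card_pos.ne'
  rw [div_eq_div_iff hcard hfiber]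
  have hsmul := card_fiber_smul_sum_perm_inv_apply hS w i hW
  simp only [nsmul_eq_mul] at hsmul
  linear_combination hsmul

end PermutationAverages

theorem sum_range_card_filter_eq {α : Type*} [Fintype α] (f : α → ℕ) (d : ℕ) :
    ∑ j ∈ range d, #{i | f i = j} = #{i | f i < d} := by
  rw [card_eq_sum_card_fiberwise (f := f) (t := range d) (fun i hi => by simpa using hi)]
  refine sum_congr rfl fun j hj => ?_
  rw [filter_filter]
  exact congrArg card (filter_congr fun i _ => by grind)

theorem Fin.map_valEmbedding_filter_eq_Ico_of_monotone {N : ℕ} {α : Type*} [PartialOrder α]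
    [DecidableEq α] [DecidableLT α] [DecidableLE α] {m : Fin N → α} (hm : Monotone m) (a : α) :
    (univ.filter (m · = a)).map Fin.valEmbedding = Ico #{k | m k < a} #{k | m k ≤ a} := by
  ext t
  simp only [mem_map, mem_filter, mem_univ, true_and, Fin.valEmbedding_apply, mem_Ico]
  constructor
  · rintro ⟨k, rfl, rfl⟩
    exact ⟨not_lt.1 fun h => lt_irrefl _ ((Tuple.lt_card_lt_iff_apply_lt_of_monotone hm).1 h),
      (Tuple.lt_card_le_iff_apply_le_of_monotone hm).2 le_rfl⟩
  · rintro ⟨hlo, hhi⟩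
    have htN : t < N := hhi.trans_le (card_le_univ _ |>.trans_eq (Fintype.card_fin N))
    refine ⟨⟨t, htN⟩, ?_, rfl⟩
    have hle := (Tuple.lt_card_le_iff_apply_le_of_monotone (j := ⟨t, htN⟩) hm).1 hhi
    have hnlt := (Tuple.lt_card_lt_iff_apply_lt_of_monotone (j := ⟨t, htN⟩) hm).not.1 hlo.not_gt
    exact eq_of_le_of_not_lt hle hnlt

theorem sum_filter_apply_perm_eq_sum_Ico {N : ℕ} {α M : Type*} [PartialOrder α] [DecidableEq α]
    [DecidableLT α] [DecidableLE α] [AddCommMonoid M] (f : Fin N → α) {σ : Equiv.Perm (Fin N)}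
    (hσ : Monotone fun k => f (σ k)) (φ : ℕ → M) (a : α) :
    ∑ k with f (σ k) = a, φ k = ∑ t ∈ Ico #{i | f i < a} #{i | f i ≤ a}, φ t := by
  have hcard : ∀ (p : α → Prop) [DecidablePred p], #{k | p (f (σ k))} = #{i | p (f i)} :=
    fun p _ => card_equiv σ (by simp)
  rw [← hcard (· < a), ← hcard (· ≤ a), ← Fin.map_valEmbedding_filter_eq_Ico_of_monotone hσ,
    sum_map]
  rfl

theorem tie_aware_DCG_general
    (N b : ℕ) (dist : Fin N → ℕ) (hdist : ∀ i, dist i ≤ b)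
    (g : Fin N → ℝ) :
    let n : ℕ → ℕ := fun d => (Finset.univ.filter (fun i : Fin N => dist i = d)).card
    -- `Ncum d = N_{d-1}` (sum over distances `j < d`)
    let Ncum : ℕ → ℕ := fun d => ∑ j ∈ Finset.range d, n j
    let DCG : Equiv.Perm (Fin N) → ℝ := fun σ =>
      ∑ k : Fin N, g (σ k) / Real.logb 2 ((k : ℕ) + 2)
    let Compat : Finset (Equiv.Perm (Fin N)) :=
      Finset.univ.filter (fun σ : Equiv.Perm (Fin N) => Monotone (fun k => dist (σ k)))
    (∑ σ ∈ Compat, DCG σ) / (Compat.card : ℝ) =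
      ∑ d ∈ Finset.range (b + 1),
        ((∑ i ∈ Finset.univ.filter (fun i : Fin N => dist i = d), g i) / (n d : ℝ)) *
          ∑ t ∈ Finset.Icc (Ncum d + 1) (Ncum (d + 1)), 1 / Real.logb 2 ((t : ℝ) + 1) := by
  intro n Ncum DCG Compat
  set W : ℕ → ℝ := fun d => ∑ t ∈ Icc (Ncum d + 1) (Ncum (d + 1)), 1 / Real.logb 2 ((t : ℝ) + 1)
  have hstable : ∀ τ : Equiv.Perm (Fin N), (∀ x, dist (τ x) = dist x) →
      ∀ σ ∈ Compat, τ * σ ∈ Compat := by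
    intro τ hτ σ hσ
    simpa [Compat, hτ] using hσ
  have hne : Compat.Nonempty :=
    ⟨Tuple.sort dist, mem_filter.2 ⟨mem_univ _, Tuple.monotone_sort dist⟩⟩
  have hblock : ∀ σ ∈ Compat, ∀ d,
      ∑ k with dist (σ k) = d, 1 / Real.logb 2 (((k : ℕ) : ℝ) + 2) = W d := by
    intro σ hσ d
    have hNcum : ∀ d, Ncum d = #{i | dist i < d} := sum_range_card_filter_eq dist
    rw [sum_filter_apply_perm_eq_sum_Ico dist (mem_filter.1 hσ).2
      (fun t => 1 / Real.logb 2 ((t : ℝ) + 2))]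
    simp only [W, hNcum, ← Ico_add_one_right_eq_Icc, ← sum_Ico_add', Nat.lt_add_one_iff]
    push_cast
    ring_nf
  calc (∑ σ ∈ Compat, DCG σ) / #Compat
      = ∑ i, g i * ((∑ σ ∈ Compat, 1 / Real.logb 2 (((σ⁻¹ i : Fin N) : ℕ) + 2)) / #Compat) := by
        simp only [DCG, div_eq_mul_one_div (g _)]
        rw [sum_sum_perm_apply_mul, sum_div]
        simp only [mul_div_assoc]
    _ = ∑ i, g i * (W (dist i) / n (dist i)) := sum_congr rfl fun i _ => by
        rw [sum_perm_inv_apply_div_card hstable hne _ i (fun σ hσ => hblock σ hσ (dist i))]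
    _ = _ := by
        rw [← sum_fiberwise_of_maps_to fun i _ => mem_range.2 (Nat.lt_succ_of_le (hdist i))]
        refine sum_congr rfl fun d _ => ?_
        rw [sum_congr rfl fun i hi => by rw [(mem_filter.1 hi).2], ← sum_mul]
        ring

/-- **Tie-aware DCG.** The average of DCG over all rankings compatible with
the integer-valued distances equals the tie-aware closed form. -/
theorem tie_aware_DCG
    (N b : ℕ) (hN : 1 ≤ N) (dist : Fin N → ℕ) (hdist : ∀ i, dist i ≤ b)
    (g : Fin N → ℝ) :
    let n : ℕ → ℕ := fun d => (Finset.univ.filter (fun i : Fin N => dist i = d)).card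
    -- `Ncum d = N_{d-1}` (sum over distances `j < d`)
    let Ncum : ℕ → ℕ := fun d => ∑ j ∈ Finset.range d, n j
    let DCG : Equiv.Perm (Fin N) → ℝ := fun σ =>
      ∑ k : Fin N, g (σ k) / Real.logb 2 ((k : ℕ) + 2)
    let Compat : Finset (Equiv.Perm (Fin N)) :=
      Finset.univ.filter (fun σ : Equiv.Perm (Fin N) => Monotone (fun k => dist (σ k)))
    (∑ σ ∈ Compat, DCG σ) / (Compat.card : ℝ) =
      ∑ d ∈ Finset.range (b + 1),
        ((∑ i ∈ Finset.univ.filter (fun i : Fin N => dist i = d), g i) / (n d : ℝ)) *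
          ∑ t ∈ Finset.Icc (Ncum d + 1) (Ncum (d + 1)), 1 / Real.logb 2 ((t : ℝ) + 1) :=
  tie_aware_DCG_general N b dist hdist g
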